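/- For any integers 1 ≤ ℓ < k/2, the bipartite graph H_{ℓ,k} is reflective. -/

import Mathlib

open SimpleGraph

/-- `hom(H, G)`: the number of graph homomorphisms from `H` to `G`. -/
noncomputable def homCount {α β : Type} (H : SimpleGraph α) (G : SimpleGraph β) : ℕ :=
  Nat.card (H →g G)

/-- `hom(H, G; R)`: homomorphisms mapping all of `R` to one common vertex. -/
noncomputable def homCountOn {α β : Type} (H : SimpleGraph α) (G : SimpleGraph β)
    (R : Set α) : ℕ :=
  Nat.card {f : H →g G // ∃ v : β, ∀ u ∈ R, f u = v}

/-- The fixed-point set `F_φ` of a graph automorphism `φ`. -/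
def FixedSet {V : Type} {H : SimpleGraph V} (φ : H ≃g H) : Set V := {v | φ v = v}

/-- `(A, B, φ)` is a nice triple of `H`: `φ` is an involutive automorphism; `A`, `B` and
`F_φ` partition `V(H)`; `F_φ` separates `A` and `B` (every walk from `A` to `B` meets
`F_φ`); and `φ(A) = B`. -/
def IsNiceTriple {V : Type} (H : SimpleGraph V) (A B : Set V) (φ : H ≃g H) : Prop :=
  (∀ v, φ (φ v) = v) ∧
  Disjoint A B ∧ Disjoint A (FixedSet φ) ∧ Disjoint B (FixedSet φ) ∧
  A ∪ B ∪ FixedSet φ = Set.univ ∧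
  (∀ a ∈ A, ∀ b ∈ B, ∀ w : H.Walk a b, ∃ v ∈ w.support, v ∈ FixedSet φ) ∧
  ⇑φ '' A = B

/-- `H` is bipartite with parts `X₁` and `X₂`. -/
def IsBipartitionOf {V : Type} (H : SimpleGraph V) (X₁ X₂ : Set V) : Prop :=
  Disjoint X₁ X₂ ∧ X₁ ∪ X₂ = Set.univ ∧
  ∀ ⦃u v⦄, H.Adj u v → (u ∈ X₁ ∧ v ∈ X₂) ∨ (u ∈ X₂ ∧ v ∈ X₁)

/-- `R` is admissible for the nice triple `(A, B, φ)` (relative to the bipartition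
`X₁, X₂` of `H`): all vertices of `R` lie in the same part, and `R` meets both
`A ∪ F_φ` and `B ∪ F_φ`. -/
def IsAdmissible {V : Type} {H : SimpleGraph V} (X₁ X₂ A B : Set V) (φ : H ≃g H)
    (R : Set V) : Prop :=
  (R ⊆ X₁ ∨ R ⊆ X₂) ∧ (R ∩ (A ∪ FixedSet φ)).Nonempty ∧ (R ∩ (B ∪ FixedSet φ)).Nonempty

/-- `ψ_{A,B,φ}(R) = (R ∩ (A ∪ F_φ)) ∪ φ(R ∩ A)`. -/
def psiSet {V : Type} {H : SimpleGraph V} (A : Set V) (φ : H ≃g H) (R : Set V) : Set V :=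
  (R ∩ (A ∪ FixedSet φ)) ∪ ⇑φ '' (R ∩ A)

/-- `H` (connected bipartite, with parts `X₁, X₂`) is reflective: every two-element
subset `R` of a part `X` can be transformed into `X` by a sequence of reflections
`R_{j+1} = ψ_{A_j,B_j,φ_j}(R_j)` along nice triples for which `R_j` is admissible. -/
def IsReflective {V : Type} (H : SimpleGraph V) (X₁ X₂ : Set V) : Prop :=
  ∀ X : Set V, X = X₁ ∨ X = X₂ → ∀ R : Set V, R ⊆ X → R.ncard = 2 →
    ∃ (m : ℕ) (A B : ℕ → Set V) (φ : ℕ → (H ≃g H)) (Rs : ℕ → Set V),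
      Rs 0 = R ∧ Rs m = X ∧
      ∀ j < m, IsNiceTriple H (A j) (B j) (φ j) ∧
        IsAdmissible X₁ X₂ (A j) (B j) (φ j) (Rs j) ∧
        Rs (j + 1) = psiSet (A j) (φ j) (Rs j)

/-- The bipartite graph `H_{ℓ,k}` whose parts are the `ℓ`-element subsets of `[k]` and
the `(k-ℓ)`-element subsets of `[k]`, with `S` joined to `T` iff `S ⊆ T`. -/
def setGraph (ℓ k : ℕ) :
    SimpleGraph ({S : Finset (Fin k) // S.card = ℓ} ⊕ {T : Finset (Fin k) // T.card = k - ℓ}) where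
  Adj x y :=
    ∃ (S : {S : Finset (Fin k) // S.card = ℓ}) (T : {T : Finset (Fin k) // T.card = k - ℓ}),
      S.1 ⊆ T.1 ∧ ((x = Sum.inl S ∧ y = Sum.inr T) ∨ (x = Sum.inr T ∧ y = Sum.inl S))
  symm := by
    constructor
    rintro x y ⟨S, T, hST, (⟨rfl, rfl⟩ | ⟨rfl, rfl⟩)⟩
    · exact ⟨S, T, hST, Or.inr ⟨rfl, rfl⟩⟩
    · exact ⟨S, T, hST, Or.inl ⟨rfl, rfl⟩⟩
  loopless := by
    constructor
    rintro x ⟨S, T, hST, (⟨rfl, h⟩ | ⟨rfl, h⟩)⟩ <;> simp at h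

/-!
A transposition `(a b)` of `[k]` induces an involutive automorphism of `H_{ℓ,k}`. Let `A` be the
vertices (sets) containing `a` but not `b`, and `B` its image. An inclusion `S ⊆ T` can never join
`A` to `B`, so the fixed vertices separate them and `(A, B, (a b))` is a nice triple. On a family
of `r`-sets, `ψ` keeps the members outside `B` and adds the images of the members in `A`.

Given distinct `r`-sets `s, t`, pick `a ∈ s \ t` and `b ∈ t \ s`: one reflection turns `{s, t}`
into `{s, s - a + b}`, the family of `r`-subsets of `N = s + b` missing an element of `C = {a, b}`.
Reflecting the `r`-subsets of `N` missing an element of `C ∋ b` along `(c b)`, `c ∈ N \ C`, gives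
those missing an element of `C + c`; when `C = N` these are all `r`-subsets of `N`. Started from
`C = {b}`, the same process turns all `r`-subsets of `M` into all `r`-subsets of `M + b`, and
repeating this reaches the whole part.
-/
section Reflection

variable {V : Type} {H : SimpleGraph V} {X₁ X₂ : Set V}

variable (H X₁ X₂) in
def IsReflectionStep (R R' : Set V) : Prop :=
  ∃ (A B : Set V) (φ : H ≃g H),
    IsNiceTriple H A B φ ∧ IsAdmissible X₁ X₂ A B φ R ∧ R' = psiSet A φ R

lemma exists_reflection_sequence_of_reflTransGen {R X : Set V}
    (h : Relation.ReflTransGen (IsReflectionStep H X₁ X₂) R X) :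
    ∃ (m : ℕ) (A B : ℕ → Set V) (φ : ℕ → (H ≃g H)) (Rs : ℕ → Set V),
      Rs 0 = R ∧ Rs m = X ∧
      ∀ j < m, IsNiceTriple H (A j) (B j) (φ j) ∧
        IsAdmissible X₁ X₂ (A j) (B j) (φ j) (Rs j) ∧
        Rs (j + 1) = psiSet (A j) (φ j) (Rs j) := by
  induction h using Relation.ReflTransGen.head_induction_on with
  | refl => exact ⟨0, fun _ => ∅, fun _ => ∅, fun _ => Iso.refl, fun _ => X, rfl, rfl, by simp⟩
  | head hstep _ ih =>
    obtain ⟨A₀, B₀, φ₀, hnice, hadm, rfl⟩ := hstep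
    obtain ⟨m, A, B, φ, Rs, h0, hm, hseq⟩ := ih
    refine ⟨m + 1, fun | 0 => A₀ | j + 1 => A j, fun | 0 => B₀ | j + 1 => B j,
      fun | 0 => φ₀ | j + 1 => φ j, fun | 0 => _ | j + 1 => Rs j, rfl, hm, ?_⟩
    rintro (_ | j) hj
    · exact ⟨hnice, hadm, h0⟩
    · exact hseq j (by omega)

lemma isReflective_of_reflTransGen
    (h : ∀ X, X = X₁ ∨ X = X₂ → ∀ R ⊆ X, R.ncard = 2 →
      Relation.ReflTransGen (IsReflectionStep H X₁ X₂) R X) :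
    IsReflective H X₁ X₂ :=
  fun X hX R hRX hR2 => exists_reflection_sequence_of_reflTransGen (h X hX R hRX hR2)

end Reflection

lemma SimpleGraph.Walk.exists_mem_support_of_not_adj {V : Type} {G : SimpleGraph V}
    {A B F : Set V} (hcover : ∀ v, v ∈ A ∨ v ∈ B ∨ v ∈ F) (hAB : Disjoint A B)
    (hadj : ∀ a ∈ A, ∀ b ∈ B, ¬G.Adj a b) {x y : V} (w : G.Walk x y) (hx : x ∈ A)
    (hy : y ∈ B) : ∃ v ∈ w.support, v ∈ F := by
  obtain ⟨d, hd, hdA, hdA'⟩ := w.exists_boundary_dart A hx (Set.disjoint_right.mp hAB hy)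
  refine ⟨d.snd, w.dart_snd_mem_support_of_mem_darts hd, ?_⟩
  rcases hcover d.snd with h | h | h
  · exact absurd h hdA'
  · exact absurd d.adj (hadj _ hdA _ h)
  · exact h

section Families

open Equiv Finset

variable {α : Type*} {a b : α} {r : ℕ} {s t N C : Finset α}

def subsetsMissing (r : ℕ) (N C : Finset α) : Set (Finset α) :=
  {s | s ⊆ N ∧ s.card = r ∧ ¬C ⊆ s}

lemma subsetsMissing_self (hr : r < N.card) : subsetsMissing r N N = ↑(N.powersetCard r) := by
  ext u
  simp only [subsetsMissing, Set.mem_ofPred_eq, mem_coe, mem_powersetCard]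
  refine ⟨fun ⟨hu, hcard, _⟩ => ⟨hu, hcard⟩, fun ⟨hu, hcard⟩ => ⟨hu, hcard, fun hNu => ?_⟩⟩
  rw [Finset.Subset.antisymm hu hNu] at hcard
  omega

variable [DecidableEq α]

@[simp]
lemma Finset.mem_map_swap {x : α} : x ∈ s.map (swap a b).toEmbedding ↔ swap a b x ∈ s := by
  rw [mem_map_equiv, symm_swap]

@[simp]
lemma Finset.map_swap_map_swap :
    (s.map (swap a b).toEmbedding).map (swap a b).toEmbedding = s := by
  ext x; simp

lemma Finset.map_swap_eq_self_iff : s.map (swap a b).toEmbedding = s ↔ (a ∈ s ↔ b ∈ s) := by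
  constructor
  · intro h
    rw [← h, mem_map_swap, swap_apply_left, h]
  · intro h
    ext x
    rw [mem_map_swap, swap_apply_def]
    split_ifs with hxa hxb
    · rw [hxa, h]
    · rw [hxb, h]
    · rfl

lemma Finset.map_swap_subset_iff (haN : a ∈ N) (hbN : b ∈ N) :
    s.map (swap a b).toEmbedding ⊆ N ↔ s ⊆ N := by
  have h (t : Finset α) (ht : t ⊆ N) : t.map (swap a b).toEmbedding ⊆ N := fun x hx => by
    rw [mem_map_swap, swap_apply_def] at hx
    split_ifs at hx with hxa hxb
    · exact hxa ▸ haN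
    · exact hxb ▸ hbN
    · exact ht hx
  exact ⟨fun hs => by simpa using h _ hs, h s⟩

lemma Finset.map_swap_of_mem_of_notMem (has : a ∈ s) (hbs : b ∉ s) :
    s.map (swap a b).toEmbedding = insert b (s.erase a) := by
  ext x
  rw [mem_map_swap, mem_insert, mem_erase, swap_apply_def]
  split_ifs with hxa hxb
  · subst hxa; simp [hbs, ne_of_mem_of_not_mem has hbs]
  · subst hxb; simp [has]
  · simp [hxa, hxb]

def psiFamily (a b : α) (𝓕 : Set (Finset α)) : Set (Finset α) :=
  {s | s ∈ 𝓕 ∧ (b ∈ s → a ∈ s) ∨ s.map (swap a b).toEmbedding ∈ 𝓕 ∧ b ∈ s ∧ a ∉ s}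

lemma psiFamily_pair (has : a ∈ s) (hbs : b ∉ s) (hbt : b ∈ t) (hat : a ∉ t) :
    psiFamily a b {s, t} = {s, s.map (swap a b).toEmbedding} := by
  ext u
  have hu : u.map (swap a b).toEmbedding = s ↔ u = s.map (swap a b).toEmbedding := by
    constructor <;> rintro rfl <;> simp
  simp only [psiFamily, Set.mem_ofPred_eq, Set.mem_insert_iff, Set.mem_singleton_iff, hu]
  constructor
  · rintro (⟨rfl | rfl, h⟩ | ⟨h | h, -, hau⟩)
    · exact Or.inl rfl
    · exact absurd (h hbt) hat
    · exact Or.inr h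
    · rw [← h, mem_map_swap, swap_apply_right] at hbt
      exact absurd hbt hau
  · rintro (rfl | rfl)
    · exact Or.inl ⟨Or.inl rfl, fun h => absurd h hbs⟩
    · right; simp [has, hbs]

lemma pair_map_swap_eq_subsetsMissing (has : a ∈ s) (hbs : b ∉ s) :
    {s, s.map (swap a b).toEmbedding} = subsetsMissing s.card (insert b s) {a, b} := by
  have hab : a ≠ b := ne_of_mem_of_not_mem has hbs
  have hcard : (insert b (s.erase a)).card = s.card := by
    rw [card_insert_of_notMem (by simp [hbs]), card_erase_add_one has]
  ext u
  simp only [subsetsMissing, Set.mem_insert_iff, Set.mem_singleton_iff, Set.mem_ofPred_eq,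
    map_swap_of_mem_of_notMem has hbs, insert_subset_iff,
    singleton_subset_iff]
  constructor
  · rintro (rfl | rfl)
    · exact ⟨subset_insert _ _, rfl, fun h => hbs h.2⟩
    · refine ⟨insert_subset_insert _ (erase_subset _ _), hcard, fun h => ?_⟩
      simp [hab] at h
  · rintro ⟨hus, hu, hab'⟩
    by_cases hbu : b ∈ u
    · right
      have hau : a ∉ u := fun hau => hab' ⟨hau, hbu⟩
      refine eq_of_subset_of_card_le (fun x hx => ?_) (by rw [hcard, hu])
      rcases mem_insert.mp (hus hx) with rfl | hxs
      · exact mem_insert_self _ _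
      · exact mem_insert_of_mem (mem_erase.mpr ⟨ne_of_mem_of_not_mem hx hau, hxs⟩)
    · left
      exact eq_of_subset_of_card_le ((subset_insert_iff_of_notMem hbu).mp hus) hu.ge

lemma psiFamily_subsetsMissing (haN : a ∈ N) (hbN : b ∈ N) (hbC : b ∈ C) :
    psiFamily a b (subsetsMissing r N C) = subsetsMissing r N (insert a C) := by
  ext u
  have hmissing (hau : a ∉ u) : ¬C ⊆ u.map (swap a b).toEmbedding := fun h => by
    simpa [hau] using h hbC
  have hb_of_subset (h : C ⊆ u) : b ∈ u := h hbC
  simp only [psiFamily, subsetsMissing, Set.mem_ofPred_eq, card_map,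
    map_swap_subset_iff haN hbN, insert_subset_iff]
  grind

lemma subsetsMissing_insert_singleton (hb : b ∉ N) :
    subsetsMissing r (insert b N) {b} = ↑(N.powersetCard r) := by
  ext u
  simp only [subsetsMissing, Set.mem_ofPred_eq, singleton_subset_iff, mem_coe, mem_powersetCard]
  constructor
  · rintro ⟨hu, hcard, hbu⟩
    exact ⟨(subset_insert_iff_of_notMem hbu).mp hu, hcard⟩
  · rintro ⟨hu, hcard⟩
    exact ⟨hu.trans (subset_insert _ _), hcard, fun hbu => hb (hu hbu)⟩

end Families

namespace SetGraph

open Equiv Finset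

variable {ℓ k : ℕ}

abbrev Vertex (ℓ k : ℕ) : Type :=
  {S : Finset (Fin k) // S.card = ℓ} ⊕ {T : Finset (Fin k) // T.card = k - ℓ}

def toFinset : Vertex ℓ k → Finset (Fin k) := Sum.elim Subtype.val Subtype.val

@[simp] lemma toFinset_inl (S : {S : Finset (Fin k) // S.card = ℓ}) :
    toFinset (Sum.inl S : Vertex ℓ k) = S := rfl

@[simp] lemma toFinset_inr (T : {T : Finset (Fin k) // T.card = k - ℓ}) :
    toFinset (Sum.inr T : Vertex ℓ k) = T := rfl

lemma toFinset_injective (hℓ : ℓ ≠ k - ℓ) : Function.Injective (toFinset : Vertex ℓ k → _) := by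
  rintro (⟨S, hS⟩ | ⟨T, hT⟩) (⟨S', hS'⟩ | ⟨T', hT'⟩) h <;>
    simp only [toFinset_inl, toFinset_inr] at h <;> subst h
  · rfl
  · exact absurd (hS.symm.trans hT') hℓ
  · exact absurd (hS'.symm.trans hT) hℓ
  · rfl

lemma range_inl_eq (hℓ : ℓ ≠ k - ℓ) :
    Set.range (Sum.inl : _ → Vertex ℓ k) = toFinset ⁻¹' {s | s.card = ℓ} := by
  ext v
  rcases v with ⟨S, hS⟩ | ⟨T, hT⟩
  · simp [hS]
  · simp [hT, Ne.symm hℓ]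

lemma range_inr_eq (hℓ : ℓ ≠ k - ℓ) :
    Set.range (Sum.inr : _ → Vertex ℓ k) = toFinset ⁻¹' {s | s.card = k - ℓ} := by
  ext v
  rcases v with ⟨S, hS⟩ | ⟨T, hT⟩
  · simp [hS, hℓ]
  · simp [hT]

lemma exists_toFinset_eq {s : Finset (Fin k)} (hs : s.card = ℓ ∨ s.card = k - ℓ) :
    ∃ v : Vertex ℓ k, toFinset v = s :=
  hs.elim (fun h => ⟨Sum.inl ⟨s, h⟩, rfl⟩) (fun h => ⟨Sum.inr ⟨s, h⟩, rfl⟩)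

@[simp] lemma adj_inl_inr {S : {S : Finset (Fin k) // S.card = ℓ}}
    {T : {T : Finset (Fin k) // T.card = k - ℓ}} :
    (setGraph ℓ k).Adj (Sum.inl S) (Sum.inr T) ↔ S.1 ⊆ T.1 := by
  refine ⟨?_, fun h => ⟨S, T, h, Or.inl ⟨rfl, rfl⟩⟩⟩
  rintro ⟨S', T', h, ⟨hS, hT⟩ | ⟨hS, -⟩⟩
  · cases hS; cases hT; exact h
  · cases hS

@[simp] lemma adj_inr_inl {S : {S : Finset (Fin k) // S.card = ℓ}}
    {T : {T : Finset (Fin k) // T.card = k - ℓ}} :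
    (setGraph ℓ k).Adj (Sum.inr T) (Sum.inl S) ↔ S.1 ⊆ T.1 := by
  refine ⟨?_, fun h => ⟨S, T, h, Or.inr ⟨rfl, rfl⟩⟩⟩
  rintro ⟨S', T', h, ⟨hT, -⟩ | ⟨hT, hS⟩⟩
  · cases hT
  · cases hS; cases hT; exact h

@[simp] lemma not_adj_inl_inl {S S' : {S : Finset (Fin k) // S.card = ℓ}} :
    ¬(setGraph ℓ k).Adj (Sum.inl S) (Sum.inl S') := by
  simp [setGraph]

@[simp] lemma not_adj_inr_inr {T T' : {T : Finset (Fin k) // T.card = k - ℓ}} :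
    ¬(setGraph ℓ k).Adj (Sum.inr T) (Sum.inr T') := by
  simp [setGraph]

lemma subset_or_subset_of_adj {u v : Vertex ℓ k} (h : (setGraph ℓ k).Adj u v) :
    toFinset u ⊆ toFinset v ∨ toFinset v ⊆ toFinset u := by
  obtain ⟨S, T, hST, ⟨rfl, rfl⟩ | ⟨rfl, rfl⟩⟩ := h
  exacts [Or.inl hST, Or.inr hST]

def permIso (σ : Perm (Fin k)) : setGraph ℓ k ≃g setGraph ℓ k where
  toEquiv := sumCongr (σ.finsetCongr.subtypeEquiv fun _ => by simp)
    (σ.finsetCongr.subtypeEquiv fun _ => by simp)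
  map_rel_iff' := by rintro (S | T) (S' | T') <;> simp [map_subset_map]

@[simp] lemma toFinset_permIso (σ : Perm (Fin k)) (v : Vertex ℓ k) :
    toFinset (permIso σ v) = (toFinset v).map σ.toEmbedding := by
  cases v <;> rfl

lemma permIso_swap_permIso_swap (a b : Fin k) (v : Vertex ℓ k) :
    permIso (swap a b) (permIso (swap a b) v) = v := by
  cases v <;> simp [permIso]

lemma permIso_eq_self_iff {σ : Perm (Fin k)} {v : Vertex ℓ k} :
    permIso σ v = v ↔ (toFinset v).map σ.toEmbedding = toFinset v := by
  cases v <;> simp [permIso, Subtype.ext_iff]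

def swapSide (a b : Fin k) : Set (Vertex ℓ k) := toFinset ⁻¹' {s | a ∈ s ∧ b ∉ s}

variable {a b : Fin k}

lemma mem_fixedSet_permIso_swap {v : Vertex ℓ k} :
    v ∈ FixedSet (permIso (swap a b)) ↔ (a ∈ toFinset v ↔ b ∈ toFinset v) :=
  permIso_eq_self_iff.trans map_swap_eq_self_iff

lemma mem_swapSide_union_fixedSet {v : Vertex ℓ k} :
    v ∈ swapSide a b ∪ FixedSet (permIso (swap a b)) ↔ (b ∈ toFinset v → a ∈ toFinset v) := by
  rw [Set.mem_union, mem_fixedSet_permIso_swap]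
  simp only [swapSide, Set.mem_preimage, Set.mem_ofPred_eq]
  tauto

lemma mem_swapSide_symm_union_fixedSet {v : Vertex ℓ k} :
    v ∈ swapSide b a ∪ FixedSet (permIso (swap a b)) ↔ (a ∈ toFinset v → b ∈ toFinset v) := by
  rw [Set.mem_union, mem_fixedSet_permIso_swap]
  simp only [swapSide, Set.mem_preimage, Set.mem_ofPred_eq]
  tauto

lemma image_permIso_swap (A : Set (Vertex ℓ k)) :
    permIso (swap a b) '' A = permIso (swap a b) ⁻¹' A :=
  congrFun (Set.image_eq_preimage_of_inverse (permIso_swap_permIso_swap a b)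
    (permIso_swap_permIso_swap a b)) A

lemma isNiceTriple_swap (a b : Fin k) :
    IsNiceTriple (setGraph ℓ k) (swapSide a b) (swapSide b a) (permIso (swap a b)) := by
  have hAB : Disjoint (swapSide a b : Set (Vertex ℓ k)) (swapSide b a) :=
    Set.disjoint_left.mpr fun _ hA hB => hA.2 hB.1
  have hcover (v : Vertex ℓ k) :
      v ∈ swapSide a b ∨ v ∈ swapSide b a ∨ v ∈ FixedSet (permIso (swap a b)) := by
    simp only [mem_fixedSet_permIso_swap, swapSide, Set.mem_preimage, Set.mem_ofPred_eq]
    tauto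
  refine ⟨permIso_swap_permIso_swap a b, hAB, ?_, ?_, ?_, ?_, ?_⟩
  · exact Set.disjoint_left.mpr fun _ hA hF => hA.2 (mem_fixedSet_permIso_swap.mp hF |>.mp hA.1)
  · exact Set.disjoint_left.mpr fun _ hB hF => hB.2 (mem_fixedSet_permIso_swap.mp hF |>.mpr hB.1)
  · exact Set.eq_univ_of_forall fun v => by simpa only [Set.mem_union, or_assoc] using hcover v
  · refine fun x hx y hy w => w.exists_mem_support_of_not_adj hcover hAB ?_ hx hy
    intro u hu v hv huv
    rcases subset_or_subset_of_adj huv with h | h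
    exacts [hv.2 (h hu.1), hu.2 (h hv.1)]
  · ext v
    simp [image_permIso_swap, swapSide, swap_apply_left, swap_apply_right]

lemma psiSet_swapSide_preimage (𝓕 : Set (Finset (Fin k))) :
    psiSet (swapSide a b) (permIso (swap a b)) (toFinset ⁻¹' 𝓕) =
      (toFinset ⁻¹' psiFamily a b 𝓕 : Set (Vertex ℓ k)) := by
  ext v
  rw [psiSet, image_permIso_swap, Set.mem_union, Set.mem_inter_iff, mem_swapSide_union_fixedSet]
  simp [psiFamily, swapSide]

variable (ℓ) in
def Reaches (𝓕 𝓖 : Set (Finset (Fin k))) : Prop :=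
  Relation.ReflTransGen (IsReflectionStep (setGraph ℓ k) (Set.range Sum.inl) (Set.range Sum.inr))
    (toFinset ⁻¹' 𝓕) (toFinset ⁻¹' 𝓖)

lemma Reaches.trans {𝓕 𝓖 𝓗 : Set (Finset (Fin k))} (h₁ : Reaches ℓ 𝓕 𝓖)
    (h₂ : Reaches ℓ 𝓖 𝓗) : Reaches ℓ 𝓕 𝓗 :=
  Relation.ReflTransGen.trans h₁ h₂

lemma Reaches.refl (𝓕 : Set (Finset (Fin k))) : Reaches ℓ 𝓕 𝓕 :=
  Relation.ReflTransGen.refl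

variable {r : ℕ} {N C M : Finset (Fin k)}

lemma reaches_psiFamily (hℓ : ℓ ≠ k - ℓ) (hr : r = ℓ ∨ r = k - ℓ) {𝓕 : Set (Finset (Fin k))}
    (h𝓕 : ∀ s ∈ 𝓕, s.card = r) (hA : ∃ s ∈ 𝓕, b ∈ s → a ∈ s) (hB : ∃ s ∈ 𝓕, a ∈ s → b ∈ s) :
    Reaches ℓ 𝓕 (psiFamily a b 𝓕) := by
  have hvertex {s : Finset (Fin k)} (hs : s ∈ 𝓕) : ∃ v : Vertex ℓ k, toFinset v = s :=
    exists_toFinset_eq (h𝓕 s hs ▸ hr)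
  refine .single ⟨_, _, _, isNiceTriple_swap a b, ⟨?_, ?_, ?_⟩, (psiSet_swapSide_preimage 𝓕).symm⟩
  · rcases hr with rfl | rfl
    · exact Or.inl fun v hv => (range_inl_eq hℓ).ge (h𝓕 _ hv)
    · exact Or.inr fun v hv => (range_inr_eq hℓ).ge (h𝓕 _ hv)
  · obtain ⟨s, hs, hba⟩ := hA
    obtain ⟨v, rfl⟩ := hvertex hs
    exact ⟨v, hs, mem_swapSide_union_fixedSet.mpr hba⟩
  · obtain ⟨s, hs, hab⟩ := hB
    obtain ⟨v, rfl⟩ := hvertex hs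
    exact ⟨v, hs, mem_swapSide_symm_union_fixedSet.mpr hab⟩

lemma reaches_subsetsMissing_self (hℓ : ℓ ≠ k - ℓ) (hr : r = ℓ ∨ r = k - ℓ) (hr₁ : 1 ≤ r)
    (hrN : r < N.card) (hbC : b ∈ C) (hCN : C ⊆ N)
    (hw : ∀ a ∈ N \ C, ∃ t ∈ subsetsMissing r N C, a ∈ t → b ∈ t) :
    Reaches ℓ (subsetsMissing r N C) (subsetsMissing r N N) := by
  suffices ∀ D ⊆ N \ C, Reaches ℓ (subsetsMissing r N C) (subsetsMissing r N (D ∪ C)) by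
    simpa [sdiff_union_of_subset hCN] using this _ subset_rfl
  intro D
  induction D using Finset.induction_on with
  | empty => exact fun _ => by rw [empty_union]; exact Reaches.refl _
  | insert a D _ ih =>
    intro hD
    have ha : a ∈ N \ C := hD (mem_insert_self a D)
    have haN : a ∈ N := (mem_sdiff.mp ha).1
    have hbN : b ∈ N := hCN hbC
    have hab : a ≠ b := ne_of_mem_of_not_mem hbC (mem_sdiff.mp ha).2 |>.symm
    have hbDC : b ∈ D ∪ C := mem_union_right D hbC
    have step : Reaches ℓ (subsetsMissing r N (D ∪ C)) (subsetsMissing r N (insert a D ∪ C)) := by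
      rw [insert_union, ← psiFamily_subsetsMissing haN hbN hbDC]
      refine reaches_psiFamily hℓ hr (fun s hs => hs.2.1) ?_ ?_
      · obtain ⟨t, hat, htN, htcard⟩ := exists_subsuperset_card_eq (n := r)
          (singleton_subset_iff.mpr (mem_erase.mpr ⟨hab, haN⟩)) (by simpa using hr₁)
          (by rw [card_erase_of_mem hbN]; omega)
        exact ⟨t, ⟨htN.trans (erase_subset b N), htcard,
          fun h => notMem_erase b N (htN (h hbDC))⟩, fun _ => hat (mem_singleton_self a)⟩
      · obtain ⟨t, ⟨htN, htcard, hCt⟩, habt⟩ := hw a ha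
        exact ⟨t, ⟨htN, htcard, fun h => hCt (subset_union_right.trans h)⟩, habt⟩
    exact (ih (subset_insert a D |>.trans hD)).trans step

lemma reaches_powersetCard_insert (hℓ : ℓ ≠ k - ℓ) (hr : r = ℓ ∨ r = k - ℓ) (hr₁ : 1 ≤ r)
    (hrM : r < M.card) (hbM : b ∉ M) :
    Reaches ℓ (M.powersetCard r : Set (Finset (Fin k))) ↑((insert b M).powersetCard r) := by
  have hcard : (insert b M).card = M.card + 1 := card_insert_of_notMem hbM
  rw [← subsetsMissing_insert_singleton hbM, ← subsetsMissing_self (by omega)]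
  refine reaches_subsetsMissing_self hℓ hr hr₁ (by omega) (mem_singleton_self b)
    (singleton_subset_iff.mpr (mem_insert_self b M)) fun a ha => ?_
  have haM : a ∈ M := by
    simp only [mem_sdiff, mem_insert, mem_singleton] at ha
    exact ha.1.resolve_left ha.2
  obtain ⟨t, htM, htcard⟩ := exists_subset_card_eq (s := M.erase a) (n := r)
    (by rw [card_erase_of_mem haM]; omega)
  refine ⟨t, ⟨htM.trans ((M.erase_subset a).trans (M.subset_insert b)), htcard, ?_⟩, ?_⟩
  · exact fun h => hbM ((M.erase_subset a) (htM (singleton_subset_iff.mp h)))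
  · exact fun hat => absurd (htM hat) (notMem_erase a M)

lemma reaches_powersetCard_univ (hℓ : ℓ ≠ k - ℓ) (hr : r = ℓ ∨ r = k - ℓ) (hr₁ : 1 ≤ r)
    (hrM : r < M.card) :
    Reaches ℓ (M.powersetCard r : Set (Finset (Fin k))) {s | s.card = r} := by
  suffices ∀ D ⊆ univ \ M,
      Reaches ℓ (M.powersetCard r : Set (Finset (Fin k))) ↑((D ∪ M).powersetCard r) by
    convert this _ subset_rfl
    ext
    simp [sdiff_union_of_subset (subset_univ M)]
  intro D
  induction D using Finset.induction_on with
  | empty => exact fun _ => by rw [empty_union]; exact Reaches.refl _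
  | insert b D hbD ih =>
    intro hD
    have hbM : b ∉ M := (mem_sdiff.mp (hD (mem_insert_self b D))).2
    rw [insert_union]
    refine (ih ((subset_insert b D).trans hD)).trans
      (reaches_powersetCard_insert hℓ hr hr₁ ?_ (by simp [hbD, hbM]))
    exact hrM.trans_le (card_le_card subset_union_right)

lemma reaches_all_of_pair (hℓ : ℓ ≠ k - ℓ) (hr : r = ℓ ∨ r = k - ℓ) {s t : Finset (Fin k)}
    (hs : s.card = r) (ht : t.card = r) (hst : s ≠ t) : Reaches ℓ {s, t} {u | u.card = r} := by
  obtain ⟨a, has, hat⟩ := not_subset.mp fun h => hst (eq_of_subset_of_card_le h (by omega))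
  obtain ⟨b, hbt, hbs⟩ := not_subset.mp fun h => hst (eq_of_subset_of_card_le h (by omega)).symm
  have hab : a ≠ b := ne_of_mem_of_not_mem has hbs
  have hr₁ : 1 ≤ r := hs ▸ card_pos.mpr ⟨a, has⟩
  have hN : (insert b s).card = r + 1 := by rw [card_insert_of_notMem hbs, hs]
  have first : Reaches ℓ {s, t} (subsetsMissing r (insert b s) {a, b}) := by
    rw [← hs, ← pair_map_swap_eq_subsetsMissing has hbs, ← psiFamily_pair has hbs hbt hat]
    refine reaches_psiFamily hℓ hr ?_ ⟨s, .inl rfl, fun h => absurd h hbs⟩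
      ⟨t, .inr rfl, fun h => absurd h hat⟩
    rintro u (rfl | rfl) <;> assumption
  have second : Reaches ℓ (subsetsMissing r (insert b s) {a, b})
      ↑((insert b s).powersetCard r) := by
    rw [← subsetsMissing_self (by omega)]
    refine reaches_subsetsMissing_self (b := b) hℓ hr hr₁ (by omega) (by simp)
      (by simp [insert_subset_iff, has]) fun c _ => ⟨(insert b s).erase a, ⟨?_, ?_, ?_⟩, ?_⟩
    · exact erase_subset a _
    · rw [card_erase_of_mem (mem_insert_of_mem has), hN]; rfl
    · exact fun h => notMem_erase a _ (h (mem_insert_self a {b}))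
    · exact fun _ => mem_erase.mpr ⟨hab.symm, mem_insert_self b s⟩
  exact first.trans (second.trans (reaches_powersetCard_univ hℓ hr hr₁ (by omega)))

end SetGraph

theorem setGraph_reflective_general (ℓ k : ℕ) (hk : 2 * ℓ < k) :
    IsReflective (setGraph ℓ k) (Set.range Sum.inl) (Set.range Sum.inr) := by
  have hℓk : ℓ ≠ k - ℓ := by omega
  refine isReflective_of_reflTransGen fun X hX R hRX hR2 => ?_
  obtain ⟨r, hr, rfl⟩ : ∃ r, (r = ℓ ∨ r = k - ℓ) ∧ X = SetGraph.toFinset ⁻¹' {s | s.card = r} :=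
    hX.elim (fun h => ⟨ℓ, .inl rfl, h.trans (SetGraph.range_inl_eq hℓk)⟩)
      (fun h => ⟨k - ℓ, .inr rfl, h.trans (SetGraph.range_inr_eq hℓk)⟩)
  obtain ⟨u, v, huv, rfl⟩ := Set.ncard_eq_two.mp hR2
  have hinj := SetGraph.toFinset_injective hℓk
  rw [← hinj.preimage_image {u, v}, Set.image_pair]
  exact SetGraph.reaches_all_of_pair hℓk hr (hRX (by simp)) (hRX (by simp)) (hinj.ne huv)

/-- For any integers `1 ≤ ℓ < k/2`, the bipartite graph `H_{ℓ,k}` is reflective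
(with respect to its bipartition into `ℓ`-sets and `(k-ℓ)`-sets). -/
theorem setGraph_reflective (ℓ k : ℕ) (hℓ : 1 ≤ ℓ) (hk : 2 * ℓ < k) :
    IsReflective (setGraph ℓ k) (Set.range Sum.inl) (Set.range Sum.inr) :=
  setGraph_reflective_general ℓ k hk
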